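/- Let M be a multiplicatively written linearly ordered ℝ-vector space and m₀,...,m_k ∈ M be small and pairwise comparable (for all i, j there exist a,b > 0 with mⱼ^a < mᵢ < mⱼ^b). Let G be a generalized power series over a commutative ring K with natural support contained in [0,∞)^{k+1}. Then the support of the series F := G(m₀,...,m_k) in M is ⟨m₀,...,m_k⟩^×-natural: for every p in the multiplicative ℝ-subspace generated by m₀,...,m_k, only finitely many n ∈ supp(F) satisfy n > p. -/

import Mathlib

/-!
Comparability with `m 0` gives `a i • m 0 < m i < b i • m 0`. By the lower bounds, every `p` in
the span of the `m i` satisfies `R • m 0 ≤ p` for some `R`; by the upper bounds,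
`∑ i, α i • m i ≤ (∑ i, α i * b i) • m 0` for `α ≥ 0`. So a monomial `m^α` of `G` lying above `p`
has `α i < R / b i` for every `i`, and naturality of the support leaves finitely many such `α`.
-/

/-- Mathlib's former `OrderedSMul` (removed since), restated with its old fields. -/
class OrderedSMul (R M : Type*) [Zero R] [LT R] [LT M] [SMul R M] : Prop where
  protected smul_lt_smul_of_pos : ∀ {a b : M}, ∀ {c : R}, a < b → 0 < c → c • a < c • b
  protected lt_of_smul_lt_smul_of_pos : ∀ {a b : M}, ∀ {c : R}, c • a < c • b → 0 < c → a < b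

instance OrderedSMul.toPosSMulStrictMono {M : Type*} [AddCommGroup M] [PartialOrder M]
    [Module ℝ M] [OrderedSMul ℝ M] : PosSMulStrictMono ℝ M :=
  ⟨fun _ ha _ _ hb => OrderedSMul.smul_lt_smul_of_pos hb ha⟩

section OrderedModule

variable {M : Type*} [AddCommGroup M] [LinearOrder M] [IsOrderedAddMonoid M] [Module ℝ M]
  [PosSMulMono ℝ M]

def absBoundedSubmodule (e : M) : Submodule ℝ M where
  carrier := {x | ∃ R : ℝ, |x| ≤ R • e}
  zero_mem' := ⟨0, by simp⟩
  add_mem' := by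
    rintro x y ⟨R, hx⟩ ⟨S, hy⟩
    exact ⟨R + S, (abs_add_le x y).trans (add_smul R S e ▸ add_le_add hx hy)⟩
  smul_mem' := by
    rintro r x ⟨R, hx⟩
    refine ⟨|r| * R, ?_⟩
    rw [abs_smul, mul_smul]
    exact smul_le_smul_of_nonneg_left hx (abs_nonneg r)

lemma exists_smul_le_of_mem_span {ι : Type*} {v : ι → M} {e : M}
    (hv : ∀ i, ∃ a : ℝ, a • e < v i) (hvneg : ∀ i, v i < 0) {p : M}
    (hp : p ∈ Submodule.span ℝ (Set.range v)) : ∃ R : ℝ, R • e ≤ p := by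
  have hbound : Submodule.span ℝ (Set.range v) ≤ absBoundedSubmodule (-e) := by
    rw [Submodule.span_le]
    rintro _ ⟨i, rfl⟩
    obtain ⟨a, ha⟩ := hv i
    refine ⟨a, ?_⟩
    rw [abs_of_neg (hvneg i), smul_neg]
    exact neg_le_neg ha.le
  obtain ⟨R, hR⟩ := hbound hp
  refine ⟨R, ?_⟩
  calc R • e = -(R • -e) := by rw [smul_neg, neg_neg]
    _ ≤ -|p| := neg_le_neg hR
    _ ≤ p := neg_abs_le p

lemma sum_mul_lt_of_smul_lt_sum_smul {ι : Type*} [Fintype ι] {v : ι → M} {e : M} (he : e < 0)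
    {b α : ι → ℝ} (hv : ∀ i, v i ≤ b i • e) (hα : ∀ i, 0 ≤ α i) {R : ℝ}
    (hR : R • e < ∑ i, α i • v i) : ∑ i, α i * b i < R := by
  have hsum : ∑ i, α i • v i ≤ (∑ i, α i * b i) • e := by
    rw [Finset.sum_smul]
    gcongr with i
    rw [mul_smul]
    exact smul_le_smul_of_nonneg_left (hv i) (hα i)
  by_contra! h
  have := smul_le_smul_of_nonneg_right h (neg_nonneg.mpr he.le)
  rw [smul_neg, smul_neg, neg_le_neg_iff] at this
  exact (hR.trans_le hsum).not_ge this

end OrderedModule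

/-- The multiplicatively written linearly ordered `ℝ`-vector space `M` is formalized
additively: `m^α` corresponds to `∑ i, α i • m i`, small (`< 1`) corresponds to `< 0`,
and `m, n` are comparable iff `a • n < m < b • n` for some `a, b > 0`.

A generalized power series `G` over `K` is given by its coefficient function
`c : [0,∞)^{k+1} → K`; the series `F = G(m₀, …, m_k)` has coefficients
`F g = ∑ᶠ {α : m^α = g} c α`. -/
theorem stmt3 {M : Type*} [AddCommGroup M] [LinearOrder M] [IsOrderedAddMonoid M] [Module ℝ M] [OrderedSMul ℝ M]
    {K : Type*} [CommRing K]
    (k : ℕ) (m : Fin (k + 1) → M) (hsmall : ∀ i, m i < 0)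
    (hcomp : ∀ i j, ∃ a b : ℝ, 0 < a ∧ 0 < b ∧ a • m j < m i ∧ m i < b • m j)
    (c : (Fin (k + 1) → ℝ) → K)
    (hnn : ∀ α, c α ≠ 0 → ∀ i, 0 ≤ α i)
    (hnatsupp : ∀ i, ∀ a : ℝ, 0 < a → {t : ℝ | t < a ∧ ∃ α, c α ≠ 0 ∧ α i = t}.Finite)
    (F : M → K)
    (hF : ∀ g : M, F g = ∑ᶠ (α : Fin (k + 1) → ℝ) (_ : ∑ i, α i • m i = g), c α)
    (p : M) (hp : p ∈ Submodule.span ℝ (Set.range m)) :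
    {g : M | F g ≠ 0 ∧ p < g}.Finite := by
  choose a b _ hb hlow hhigh using fun i => hcomp i 0
  obtain ⟨R, hR⟩ := exists_smul_le_of_mem_span (fun i => ⟨a i, hlow i⟩) hsmall hp
  have hT : ∀ i, {t : ℝ | t < R / b i ∧ ∃ α, c α ≠ 0 ∧ α i = t}.Finite := fun i =>
    (hnatsupp i (max (R / b i) 1) (lt_max_of_lt_right one_pos)).subset
      fun t ht => ⟨ht.1.trans_le (le_max_left _ _), ht.2⟩
  refine ((Set.Finite.pi hT).image fun α => ∑ i, α i • m i).subset ?_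
  rintro g ⟨hFg, hpg⟩
  obtain ⟨α, (rfl : ∑ i, α i • m i = g), hcα⟩ :=
    exists_ne_zero_of_finsum_mem_ne_zero (hF g ▸ hFg)
  have hαb := sum_mul_lt_of_smul_lt_sum_smul (hsmall 0) (fun i => (hhigh i).le) (hnn α hcα)
    (hR.trans_lt hpg)
  refine ⟨α, fun i _ => ⟨?_, α, hcα, rfl⟩, rfl⟩
  rw [lt_div_iff₀ (hb i)]
  exact (Finset.single_le_sum (fun j _ => mul_nonneg (hnn α hcα j) (hb j).le)
    (Finset.mem_univ i)).trans_lt hαb
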